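/- Let l ≥ 4 with l ≡ 0 (mod 3), let H be the graph obtained from the cycle C = u_1 u_2 ... u_l u_1 by adding two new vertices v_1, v_2 and the edges u_1 v_1 and u_2 v_2, and let P be the path v_1 u_1 u_2 v_2 in H. Let f be a path-extendable 6-L(2,1)-labeling of P with {f(u_1), f(u_2)} ∩ {1, 3, 5} ≠ ∅. Then f can be extended to a 6-L(2,1)-labeling f_1 of H such that the restriction of f_1 to the path C − u_1u_2 is a path-extendable 6-L(2,1)-labeling of that path. -/

import Mathlib

/-- An L(2,1)-labeling of a simple graph: adjacent vertices get labels differing by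
at least 2, and vertices at distance exactly 2 get distinct labels. -/
def IsL21Labeling {V : Type*} (G : SimpleGraph V) (f : V → ℕ) : Prop :=
  (∀ a b : V, G.Adj a b → 2 ≤ ((f a : ℤ) - (f b : ℤ)).natAbs) ∧
  (∀ a b : V, G.dist a b = 2 → f a ≠ f b)

/-- A k-L(2,1)-labeling: an L(2,1)-labeling with all labels in {0, 1, ..., k}. -/
def IsKL21Labeling {V : Type*} (G : SimpleGraph V) (k : ℕ) (f : V → ℕ) : Prop :=
  IsL21Labeling G f ∧ ∀ a : V, f a ≤ k

/-- The λ-number of a graph: the least k such that G admits a k-L(2,1)-labeling. -/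
noncomputable def lambdaNumber {V : Type*} (G : SimpleGraph V) : ℕ :=
  sInf {k : ℕ | ∃ f : V → ℕ, IsKL21Labeling G k f}

/-- The path graph on `Fin n`, with edges between consecutive indices. -/
def PathGraph (n : ℕ) : SimpleGraph (Fin n) :=
  SimpleGraph.fromRel (fun p q => (p : ℕ) + 1 = (q : ℕ))

/-- The vertex type of members of 𝓗(P) for P = u u_1 ... u_l v :
`Sum.inl 0` is u, `Sum.inl i` is u_i for 1 ≤ i ≤ l, `Sum.inl (l+1)` is v,
and `Sum.inr (i, false)`, `Sum.inr (i, true)` are the (at most two) new internal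
vertices of a path attached at the pair (u_i, u_{i+1}). -/
abbrev PVert (l : ℕ) := Fin (l + 2) ⊕ (ℕ × Bool)

/-- An attachment specification `D` : at position `i`, `none` means no attached path,
`some false` means a path of length 2 (one new vertex), `some true` means a path of
length 3 (two new vertices). Valid specs attach only at pairs (u_i, u_{i+1}) with
1 ≤ i ≤ l-1, and no two attachment positions are consecutive (i.e. gaps ≥ 2). -/
def ValidD (l : ℕ) (D : ℕ → Option Bool) : Prop :=
  (∀ i, (D i).isSome → 1 ≤ i ∧ i + 1 ≤ l) ∧
  (∀ i, ¬ ((D i).isSome ∧ (D (i + 1)).isSome))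

/-- The edge relation (up to symmetrization) of the member of 𝓗(P) described by `D`. -/
def attachRel (l : ℕ) (D : ℕ → Option Bool) : PVert l → PVert l → Prop
  | Sum.inl p, Sum.inl q => (p : ℕ) + 1 = (q : ℕ)
  | Sum.inl p, Sum.inr (i, k) =>
      ((p : ℕ) = i ∧ k = false) ∨
      ((p : ℕ) = i + 1 ∧ ((D i = some false ∧ k = false) ∨ (D i = some true ∧ k = true)))
  | Sum.inr (i, k), Sum.inr (j, m) => i = j ∧ D i = some true ∧ k = false ∧ m = true
  | _, _ => False

def AttachG (l : ℕ) (D : ℕ → Option Bool) : SimpleGraph (PVert l) :=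
  SimpleGraph.fromRel (attachRel l D)

/-- The vertices actually present in the member of 𝓗(P) described by `D`. -/
def Active {l : ℕ} (D : ℕ → Option Bool) : PVert l → Prop
  | Sum.inl _ => True
  | Sum.inr (i, k) => (D i).isSome ∧ (k = false ∨ D i = some true)

/-- `f` extends to a 6-L(2,1)-labeling of the member of 𝓗(P) described by `D`. -/
def ExtendsToAttach (l : ℕ) (D : ℕ → Option Bool) (f : Fin (l + 2) → ℕ) : Prop :=
  ∃ g : ↥{w : PVert l | Active D w} → ℕ,
    IsKL21Labeling ((AttachG l D).induce {w : PVert l | Active D w}) 6 g ∧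
    ∀ p : Fin (l + 2), g ⟨Sum.inl p, trivial⟩ = f p

/-- A path-extendable 6-L(2,1)-labeling of the path P = u u_1 ... u_l v :
a 6-L(2,1)-labeling of P that extends to a 6-L(2,1)-labeling of every H ∈ 𝓗(P). -/
def PathExtendable (l : ℕ) (f : Fin (l + 2) → ℕ) : Prop :=
  IsKL21Labeling (PathGraph (l + 2)) 6 f ∧
  ∀ D : ℕ → Option Bool, ValidD l D → ExtendsToAttach l D f

/-- The graph H : the cycle u_1 ... u_l (vertex `Sum.inl j` is u_{j+1}) together with
two pendant vertices v_1 = `Sum.inr false` adjacent to u_1 and v_2 = `Sum.inr true`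
adjacent to u_2. -/
def hcycRel (l : ℕ) : (Fin l ⊕ Bool) → (Fin l ⊕ Bool) → Prop
  | Sum.inl p, Sum.inl q => ((p : ℕ) + 1) % l = (q : ℕ)
  | Sum.inr false, Sum.inl p => (p : ℕ) = 0
  | Sum.inr true, Sum.inl p => (p : ℕ) = 1
  | _, _ => False

def HCyc (l : ℕ) : SimpleGraph (Fin l ⊕ Bool) := SimpleGraph.fromRel (hcycRel l)

/-!
Label the cycle `u_1 u_2 u_3 … u_l` by `a, b, d` followed by blocks `p₀ p₁ c`; as `3 ∣ l`
the blocks close up against `a`. Every window of four consecutive labels is then one of nine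
patterns, so the L(2,1)-conditions on `H`, on the path `C − u_1u_2`, and the labelling of paths
attached to the edges of that path (a local question at each edge, since attachment edges are
not consecutive) all reduce to finitely many conditions on the eight labels
`A a b B d c p₀ p₁ ∈ {0, …, 6}`. Path-extendability of `f` supplies a label for a path of
length 2 attached at `u_1u_2`, and given that, a finite search finds `d, c, p₀, p₁` for every
admissible `A a b B`.
-/

def Far (x y : ℕ) : Prop := x + 2 ≤ y ∨ y + 2 ≤ x

instance (x y : ℕ) : Decidable (Far x y) := inferInstanceAs (Decidable (_ ∨ _))

theorem Far.symm {x y : ℕ} (h : Far x y) : Far y x := Or.symm h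

theorem Far.ne {x y : ℕ} (h : Far x y) : x ≠ y := by unfold Far at h; omega

theorem far_iff_two_le_natAbs {x y : ℕ} : Far x y ↔ 2 ≤ ((x : ℤ) - y).natAbs := by
  unfold Far; omega

theorem SimpleGraph.dist_eq_two_iff {V : Type*} {G : SimpleGraph V} {x y : V} :
    G.dist x y = 2 ↔ x ≠ y ∧ ¬ G.Adj x y ∧ ∃ z, G.Adj x z ∧ G.Adj z y := by
  rw [SimpleGraph.dist, ENat.toNat_eq_iff two_ne_zero]
  rw [Nat.cast_ofNat, SimpleGraph.edist_eq_two_iff]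
  simp only [Set.Nonempty, SimpleGraph.mem_commonNeighbors, G.adj_comm y]

section Labeling

variable {V : Type*} {G : SimpleGraph V} {f : V → ℕ}

theorem IsL21Labeling.far (hf : IsL21Labeling G f) {x y : V} (h : G.Adj x y) :
    Far (f x) (f y) :=
  far_iff_two_le_natAbs.mpr (hf.1 x y h)

theorem IsL21Labeling.ne (hf : IsL21Labeling G f) {x y z : V} (hxz : G.Adj x z)
    (hzy : G.Adj z y) (hxy : x ≠ y) (hn : ¬ G.Adj x y) : f x ≠ f y :=
  hf.2 x y (SimpleGraph.dist_eq_two_iff.mpr ⟨hxy, hn, z, hxz, hzy⟩)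

/-- Adjacent vertices are already far apart, so it suffices to separate the neighbours
of every vertex. -/
theorem IsL21Labeling.of_far_of_ne (hfar : ∀ x y, G.Adj x y → Far (f x) (f y))
    (hne : ∀ x y z, G.Adj z x → G.Adj z y → x ≠ y → f x ≠ f y) : IsL21Labeling G f := by
  refine ⟨fun x y h => far_iff_two_le_natAbs.mp (hfar x y h), fun x y h => ?_⟩
  obtain ⟨hxy, -, z, hxz, hzy⟩ := SimpleGraph.dist_eq_two_iff.mp h
  exact hne x y z hxz.symm hzy hxy

end Labeling

theorem pathGraph_adj {n : ℕ} {p q : Fin n} :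
    (PathGraph n).Adj p q ↔ (p : ℕ) + 1 = q ∨ (q : ℕ) + 1 = p := by
  rw [PathGraph, SimpleGraph.fromRel_adj]
  exact ⟨And.right, fun h => ⟨fun hpq => by subst hpq; omega, h⟩⟩

theorem isKL21Labeling_pathGraph {n : ℕ} {s : ℕ → ℕ} (hle : ∀ j < n, s j ≤ 6)
    (hfar : ∀ j, j + 2 ≤ n → Far (s j) (s (j + 1)))
    (hne : ∀ j, j + 3 ≤ n → s j ≠ s (j + 2)) :
    IsKL21Labeling (PathGraph n) 6 (fun p : Fin n => s p) := by
  refine ⟨.of_far_of_ne (fun p q h => ?_) (fun p q r hrp hrq hpq => ?_), fun p => hle p p.isLt⟩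
  · rcases pathGraph_adj.mp h with h | h
    · simpa [← h] using hfar p (by omega)
    · simpa [← h] using (hfar q (by omega)).symm
  · have hpq' : (p : ℕ) ≠ q := Fin.val_ne_of_ne hpq
    rcases pathGraph_adj.mp hrp with h₁ | h₁ <;> rcases pathGraph_adj.mp hrq with h₂ | h₂
    · omega
    · simpa [show (p : ℕ) = q + 2 by omega] using (hne q (by omega)).symm
    · simpa [show (q : ℕ) = p + 2 by omega] using hne p (by omega)
    · omega

theorem IsL21Labeling.pathGraph_four {f : Fin 4 → ℕ} (hf : IsL21Labeling (PathGraph 4) f) :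
    Far (f 0) (f 1) ∧ Far (f 1) (f 2) ∧ Far (f 2) (f 3) ∧ f 0 ≠ f 2 ∧ f 1 ≠ f 3 := by
  have hadj : ∀ i j : Fin 4, (i : ℕ) + 1 = j → (PathGraph 4).Adj i j :=
    fun i j h => pathGraph_adj.mpr (.inl h)
  have hnadj : ∀ i j : Fin 4, (i : ℕ) + 2 = j → ¬ (PathGraph 4).Adj i j :=
    fun i j h h' => by rw [pathGraph_adj] at h'; omega
  exact ⟨hf.far (hadj 0 1 rfl), hf.far (hadj 1 2 rfl), hf.far (hadj 2 3 rfl),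
    hf.ne (hadj 0 1 rfl) (hadj 1 2 rfl) (by decide) (hnadj 0 2 rfl),
    hf.ne (hadj 1 2 rfl) (hadj 2 3 rfl) (by decide) (hnadj 1 3 rfl)⟩

/-- The edge `xy` of a path `… p x y q …` admits the label `t` on the middle vertex of an
attached path of length 2. -/
def Length2Fits (p x y q t : ℕ) : Prop := Far t x ∧ Far t y ∧ t ≠ p ∧ t ≠ q

/-- The edge `xy` of a path `… p x y q …` admits the labels `w₁, w₂` on the inner vertices
`x w₁ w₂ y` of an attached path of length 3. -/
def Length3Fits (p x y q w₁ w₂ : ℕ) : Prop :=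
  Far w₁ x ∧ w₁ ≠ p ∧ w₁ ≠ y ∧ Far w₂ y ∧ w₂ ≠ q ∧ w₂ ≠ x ∧ Far w₁ w₂

def EdgeExtendable (p x y q : ℕ) : Prop :=
  (∃ t < 7, Length2Fits p x y q t) ∧ ∃ w₁ < 7, ∃ w₂ < 7, Length3Fits p x y q w₁ w₂

instance (p x y q t : ℕ) : Decidable (Length2Fits p x y q t) :=
  inferInstanceAs (Decidable (_ ∧ _))

instance (p x y q w₁ w₂ : ℕ) : Decidable (Length3Fits p x y q w₁ w₂) :=
  inferInstanceAs (Decidable (_ ∧ _))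

instance (p x y q : ℕ) : Decidable (EdgeExtendable p x y q) :=
  inferInstanceAs (Decidable (_ ∧ _))

section Attach

variable {l : ℕ} {D : ℕ → Option Bool} {s t w₁ w₂ : ℕ → ℕ}

theorem attachG_adj_inl_inl {p q : Fin (l + 2)} :
    (AttachG l D).Adj (.inl p) (.inl q) ↔ (p : ℕ) + 1 = q ∨ (q : ℕ) + 1 = p := by
  rw [AttachG, SimpleGraph.fromRel_adj]
  refine ⟨And.right, fun h => ⟨fun hpq => ?_, h⟩⟩
  cases hpq
  omega

theorem attachG_adj_inl_inr {p : Fin (l + 2)} {i : ℕ} {k : Bool} :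
    (AttachG l D).Adj (.inl p) (.inr (i, k)) ↔
      ((p : ℕ) = i ∧ k = false) ∨
      ((p : ℕ) = i + 1 ∧ (D i = some false ∧ k = false ∨ D i = some true ∧ k = true)) := by
  rw [AttachG, SimpleGraph.fromRel_adj]
  simp [attachRel]

theorem attachG_adj_inr_inr {i j : ℕ} {k m : Bool} :
    (AttachG l D).Adj (.inr (i, k)) (.inr (j, m)) ↔ i = j ∧ D i = some true ∧ k ≠ m := by
  rw [AttachG, SimpleGraph.fromRel_adj]
  cases k <;> cases m <;> simp [attachRel]
  grind

/-- The middle vertex of an attached path of length 2 at `(u_i, u_{i+1})` gets `t i`; the inner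
vertices of one of length 3 get `w₁ i, w₂ i`. -/
def attachLabel (l : ℕ) (D : ℕ → Option Bool) (s t w₁ w₂ : ℕ → ℕ) : PVert l → ℕ
  | .inl p => s p
  | .inr (i, false) => if D i = some true then w₁ i else t i
  | .inr (i, true) => w₂ i

structure AttachWitnesses (D : ℕ → Option Bool) (s t w₁ w₂ : ℕ → ℕ) : Prop where
  length2 : ∀ i, D i = some false → Length2Fits (s (i - 1)) (s i) (s (i + 1)) (s (i + 2)) (t i)
  length3 : ∀ i, D i = some true →
    Length3Fits (s (i - 1)) (s i) (s (i + 1)) (s (i + 2)) (w₁ i) (w₂ i)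
  length2_le : ∀ i, D i = some false → t i ≤ 6
  length3_le : ∀ i, D i = some true → w₁ i ≤ 6 ∧ w₂ i ≤ 6

theorem far_attachLabel_inl_inr (hW : AttachWitnesses D s t w₁ w₂) {p : Fin (l + 2)} {i : ℕ}
    {k : Bool} (hk : Active D (.inr (i, k) : PVert l))
    (h : (AttachG l D).Adj (.inl p) (.inr (i, k))) :
    Far (attachLabel l D s t w₁ w₂ (.inl p)) (attachLabel l D s t w₁ w₂ (.inr (i, k))) := by
  rcases attachG_adj_inl_inr.mp h with ⟨hp, rfl⟩ | ⟨hp, ⟨hDi, rfl⟩ | ⟨hDi, rfl⟩⟩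
  · rcases hDi : D i with _ | _ | _
    · simp [Active, hDi] at hk
    · simpa [attachLabel, hDi, hp] using (hW.length2 i hDi).1.symm
    · simpa [attachLabel, hDi, hp] using (hW.length3 i hDi).1.symm
  · simpa [attachLabel, hDi, hp] using (hW.length2 i hDi).2.1.symm
  · simpa [attachLabel, hDi, hp] using (hW.length3 i hDi).2.2.2.1.symm

theorem attachLabel_inl_ne_inr_of_adj_inl (hW : AttachWitnesses D s t w₁ w₂)
    {p q : Fin (l + 2)} {i : ℕ} {k : Bool} (hk : Active D (.inr (i, k) : PVert l))
    (hq : (AttachG l D).Adj (.inl p) (.inl q)) (h : (AttachG l D).Adj (.inl p) (.inr (i, k))) :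
    attachLabel l D s t w₁ w₂ (.inl q) ≠ attachLabel l D s t w₁ w₂ (.inr (i, k)) := by
  have hpq := attachG_adj_inl_inl.mp hq
  rcases attachG_adj_inl_inr.mp h with ⟨hp, rfl⟩ | ⟨hp, ⟨hDi, rfl⟩ | ⟨hDi, rfl⟩⟩
  · rcases hDi : D i with _ | _ | _
    · simp [Active, hDi] at hk
    · obtain ⟨h₁, h₂, h₃, -⟩ := hW.length2 i hDi
      rcases hpq with hpq | hpq
      · simpa [attachLabel, hDi, show (q : ℕ) = i + 1 by omega] using h₂.ne.symm
      · simpa [attachLabel, hDi, show (q : ℕ) = i - 1 by omega] using h₃.symm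
    · obtain ⟨-, h₁, h₂, -⟩ := hW.length3 i hDi
      rcases hpq with hpq | hpq
      · simpa [attachLabel, hDi, show (q : ℕ) = i + 1 by omega] using h₂.symm
      · simpa [attachLabel, hDi, show (q : ℕ) = i - 1 by omega] using h₁.symm
  · obtain ⟨h₁, -, -, h₂⟩ := hW.length2 i hDi
    rcases hpq with hpq | hpq
    · simpa [attachLabel, hDi, show (q : ℕ) = i + 2 by omega] using h₂.symm
    · simpa [attachLabel, hDi, show (q : ℕ) = i by omega] using h₁.ne.symm
  · obtain ⟨-, -, -, -, h₁, h₂, -⟩ := hW.length3 i hDi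
    rcases hpq with hpq | hpq
    · simpa [attachLabel, hDi, show (q : ℕ) = i + 2 by omega] using h₁.symm
    · simpa [attachLabel, hDi, show (q : ℕ) = i by omega] using h₂.symm

theorem attachG_eq_of_adj_inl_of_adj_inl (hD : ValidD l D) {p : Fin (l + 2)} {i j : ℕ} {k m : Bool}
    (hk : Active D (.inr (i, k) : PVert l)) (hm : Active D (.inr (j, m) : PVert l))
    (h₁ : (AttachG l D).Adj (.inl p) (.inr (i, k)))
    (h₂ : (AttachG l D).Adj (.inl p) (.inr (j, m))) : (i, k) = (j, m) := by
  have hvalid := hD.2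
  simp only [Active] at hk hm
  rw [attachG_adj_inl_inr] at h₁ h₂
  grind

theorem attachLabel_inl_ne_inr_of_adj_inr (hW : AttachWitnesses D s t w₁ w₂) {q : Fin (l + 2)}
    {i : ℕ} {k m : Bool} (hq : (AttachG l D).Adj (.inr (i, k)) (.inl q))
    (hm : (AttachG l D).Adj (.inr (i, k)) (.inr (i, m))) :
    attachLabel l D s t w₁ w₂ (.inl q) ≠ attachLabel l D s t w₁ w₂ (.inr (i, m)) := by
  obtain ⟨-, hDi, hkm⟩ := attachG_adj_inr_inr.mp hm
  obtain ⟨-, -, h₁, -, -, h₂, -⟩ := hW.length3 i hDi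
  rcases attachG_adj_inl_inr.mp hq.symm with ⟨hqi, rfl⟩ | ⟨hqi, ⟨hD', -⟩ | ⟨-, rfl⟩⟩
  · simpa [attachLabel, hqi, Bool.eq_not.mpr hkm.symm] using h₂.symm
  · simp [hDi] at hD'
  · simpa [attachLabel, hqi, hDi, Bool.eq_not.mpr hkm.symm] using h₁.symm

theorem attachLabel_ne_of_adj_inr (hfar : ∀ j, j + 2 ≤ l + 2 → Far (s j) (s (j + 1)))
    (hW : AttachWitnesses D s t w₁ w₂) {i : ℕ} {k : Bool} {x y : PVert l}
    (hx : (AttachG l D).Adj (.inr (i, k)) x) (hy : (AttachG l D).Adj (.inr (i, k)) y)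
    (hxy : x ≠ y) : attachLabel l D s t w₁ w₂ x ≠ attachLabel l D s t w₁ w₂ y := by
  rcases x with q | ⟨j, m⟩ <;> rcases y with q' | ⟨j', m'⟩
  · have hqq : (q : ℕ) ≠ q' := fun h => hxy (congrArg _ (Fin.ext h))
    rw [SimpleGraph.adj_comm, attachG_adj_inl_inr] at hx hy
    have hq : (q : ℕ) = i ∨ (q : ℕ) = i + 1 := hx.imp And.left And.left
    have hq' : (q' : ℕ) = i ∨ (q' : ℕ) = i + 1 := hy.imp And.left And.left
    have hsi := hfar i (by omega)
    rcases hq with hq | hq <;> rcases hq' with hq' | hq'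
    · omega
    · simpa [attachLabel, hq, hq'] using hsi.ne
    · simpa [attachLabel, hq, hq'] using hsi.ne.symm
    · omega
  · obtain ⟨rfl, -⟩ := attachG_adj_inr_inr.mp hy
    exact attachLabel_inl_ne_inr_of_adj_inr hW hx hy
  · obtain ⟨rfl, -⟩ := attachG_adj_inr_inr.mp hx
    exact (attachLabel_inl_ne_inr_of_adj_inr hW hy hx).symm
  · obtain ⟨rfl, -, hkm⟩ := attachG_adj_inr_inr.mp hx
    obtain ⟨rfl, -, hkm'⟩ := attachG_adj_inr_inr.mp hy
    cases k <;> cases m <;> cases m' <;> simp_all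

theorem attachLabel_ne_of_adj_inl (hD : ValidD l D) (hne : ∀ j, j + 3 ≤ l + 2 → s j ≠ s (j + 2))
    (hW : AttachWitnesses D s t w₁ w₂) {p : Fin (l + 2)} {x y : PVert l} (hxa : Active D x)
    (hya : Active D y) (hx : (AttachG l D).Adj (.inl p) x) (hy : (AttachG l D).Adj (.inl p) y)
    (hxy : x ≠ y) : attachLabel l D s t w₁ w₂ x ≠ attachLabel l D s t w₁ w₂ y := by
  rcases x with q | ⟨i, k⟩ <;> rcases y with q' | ⟨j, m⟩
  · have hqq : (q : ℕ) ≠ q' := fun h => hxy (congrArg _ (Fin.ext h))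
    have hq := attachG_adj_inl_inl.mp hx
    have hq' := attachG_adj_inl_inl.mp hy
    rcases hq with hq | hq <;> rcases hq' with hq' | hq'
    · omega
    · simpa [attachLabel, show (q : ℕ) = q' + 2 by omega] using (hne q' (by omega)).symm
    · simpa [attachLabel, show (q' : ℕ) = q + 2 by omega] using hne q (by omega)
    · omega
  · exact attachLabel_inl_ne_inr_of_adj_inl hW hya hx hy
  · exact (attachLabel_inl_ne_inr_of_adj_inl hW hxa hy hx).symm
  · exact absurd (congrArg _ (attachG_eq_of_adj_inl_of_adj_inl hD hxa hya hx hy)) hxy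

theorem far_attachLabel_of_adj (hfar : ∀ j, j + 2 ≤ l + 2 → Far (s j) (s (j + 1)))
    (hW : AttachWitnesses D s t w₁ w₂) {x y : PVert l} (hxa : Active D x) (hya : Active D y)
    (h : (AttachG l D).Adj x y) :
    Far (attachLabel l D s t w₁ w₂ x) (attachLabel l D s t w₁ w₂ y) := by
  rcases x with p | ⟨i, k⟩ <;> rcases y with q | ⟨j, m⟩
  · rcases attachG_adj_inl_inl.mp h with h | h
    · simpa [attachLabel, ← h] using hfar p (by omega)
    · simpa [attachLabel, ← h] using (hfar q (by omega)).symm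
  · exact far_attachLabel_inl_inr hW hya h
  · exact (far_attachLabel_inl_inr hW hxa h.symm).symm
  · obtain ⟨rfl, hDi, hkm⟩ := attachG_adj_inr_inr.mp h
    obtain ⟨-, -, -, -, -, -, h₁₂⟩ := hW.length3 i hDi
    cases k <;> cases m <;> simp_all [attachLabel, Far.symm]

theorem isKL21Labeling_attachLabel (hD : ValidD l D) (hle : ∀ j < l + 2, s j ≤ 6)
    (hfar : ∀ j, j + 2 ≤ l + 2 → Far (s j) (s (j + 1)))
    (hne : ∀ j, j + 3 ≤ l + 2 → s j ≠ s (j + 2)) (hW : AttachWitnesses D s t w₁ w₂) :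
    IsKL21Labeling ((AttachG l D).induce {w : PVert l | Active D w}) 6
      (fun v => attachLabel l D s t w₁ w₂ v) := by
  refine ⟨.of_far_of_ne (fun x y h => far_attachLabel_of_adj hfar hW x.2 y.2 h) ?_, ?_⟩
  · intro x y z hx hy hxy
    obtain ⟨z | ⟨i, k⟩, _⟩ := z
    · exact attachLabel_ne_of_adj_inl hD hne hW x.2 y.2 hx hy (Subtype.coe_ne_coe.mpr hxy)
    · exact attachLabel_ne_of_adj_inr hfar hW hx hy (Subtype.coe_ne_coe.mpr hxy)
  · rintro ⟨p | ⟨i, k⟩, hv⟩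
    · exact hle p p.isLt
    · obtain ⟨hsome, hk⟩ : Active D (.inr (i, k) : PVert l) := hv
      show attachLabel l D s t w₁ w₂ (.inr (i, k)) ≤ 6
      rcases hDi : D i with _ | _ | _
      · simp [hDi] at hsome
      · obtain rfl : k = false := by simpa [hDi] using hk
        simpa [attachLabel, hDi] using hW.length2_le i hDi
      · cases k <;> simp [attachLabel, hDi, hW.length3_le i hDi]

theorem extendsToAttach_of_edgeExtendable (hD : ValidD l D) (hle : ∀ j < l + 2, s j ≤ 6)
    (hfar : ∀ j, j + 2 ≤ l + 2 → Far (s j) (s (j + 1)))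
    (hne : ∀ j, j + 3 ≤ l + 2 → s j ≠ s (j + 2))
    (hE : ∀ i, 1 ≤ i → i + 1 ≤ l → EdgeExtendable (s (i - 1)) (s i) (s (i + 1)) (s (i + 2))) :
    ExtendsToAttach l D (fun p => s p) := by
  have hE' : ∀ i, (D i).isSome → EdgeExtendable (s (i - 1)) (s i) (s (i + 1)) (s (i + 2)) :=
    fun i hi => hE i (hD.1 i hi).1 (hD.1 i hi).2
  choose! t ht using fun i hi => (hE' i hi).1
  choose! w₁ hw₁ w₂ hw₂ using fun i hi => (hE' i hi).2
  have hW : AttachWitnesses D s t w₁ w₂ :=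
    { length2 := fun i h => (ht i (by simp [h])).2
      length3 := fun i h => (hw₂ i (by simp [h])).2
      length2_le := fun i h => Nat.le_of_lt_succ (ht i (by simp [h])).1
      length3_le := fun i h =>
        ⟨Nat.le_of_lt_succ (hw₁ i (by simp [h])), Nat.le_of_lt_succ (hw₂ i (by simp [h])).1⟩ }
  exact ⟨_, isKL21Labeling_attachLabel hD hle hfar hne hW, fun _ => rfl⟩

end Attach

theorem pathExtendable_of_edgeExtendable {n : ℕ} {s : ℕ → ℕ} (hle : ∀ j < n + 2, s j ≤ 6)
    (hfar : ∀ j, j + 2 ≤ n + 2 → Far (s j) (s (j + 1)))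
    (hne : ∀ j, j + 3 ≤ n + 2 → s j ≠ s (j + 2))
    (hE : ∀ i, 1 ≤ i → i + 1 ≤ n → EdgeExtendable (s (i - 1)) (s i) (s (i + 1)) (s (i + 2))) :
    PathExtendable n (fun p => s p) :=
  ⟨isKL21Labeling_pathGraph hle hfar hne,
    fun _ hD => extendsToAttach_of_edgeExtendable hD hle hfar hne hE⟩

theorem exists_length2Fits_of_pathExtendable_two {f : Fin 4 → ℕ} (hf : PathExtendable 2 f) :
    ∃ t < 7, Length2Fits (f 0) (f 1) (f 2) (f 3) t := by
  set D : ℕ → Option Bool := fun i => if i = 1 then some false else none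
  have hD : ValidD 2 D := by
    refine ⟨fun i hi => ?_, fun i ⟨hi, hi'⟩ => ?_⟩ <;> simp only [D] at * <;> split_ifs at * <;>
      simp_all
  obtain ⟨g, ⟨hg, hg6⟩, hgf⟩ := hf.2 D hD
  let w : {v : PVert 2 | Active D v} := ⟨.inr (1, false), by simp [D, Active]⟩
  let u : Fin 4 → {v : PVert 2 | Active D v} := fun p => ⟨.inl p, trivial⟩
  have hadj : ∀ p q : Fin 4, (p : ℕ) + 1 = q → ((AttachG 2 D).induce _).Adj (u p) (u q) :=
    fun p q h => attachG_adj_inl_inl.mpr (.inl h)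
  have hw : ∀ p : Fin 4, ((AttachG 2 D).induce _).Adj (u p) w ↔ (p : ℕ) = 1 ∨ (p : ℕ) = 2 := by
    intro p
    change (AttachG 2 D).Adj (.inl p) (.inr (1, false)) ↔ _
    simp [attachG_adj_inl_inr, D]
  refine ⟨g w, Nat.lt_succ_of_le (hg6 w), ?_, ?_, ?_, ?_⟩
  · simpa [u, hgf] using (hg.far ((hw 1).mpr (by simp))).symm
  · simpa [u, hgf] using (hg.far ((hw 2).mpr (by simp))).symm
  · simpa [u, hgf] using (hg.ne (hadj 0 1 rfl) ((hw 1).mpr (by simp))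
      (by simp [u, w, Subtype.ext_iff]) (fun h => by simpa using (hw 0).mp h)).symm
  · simpa [u, hgf] using (hg.ne (hadj 2 3 rfl).symm ((hw 2).mpr (by simp))
      (by simp [u, w, Subtype.ext_iff]) (fun h => by simpa using (hw 3).mp h)).symm

theorem hCyc_adj_inl_inl {l : ℕ} (hl : 3 ≤ l) {p q : Fin l} :
    (HCyc l).Adj (.inl p) (.inl q) ↔
      (q : ℕ) = p + 1 ∨ (p : ℕ) + 1 = l ∧ (q : ℕ) = 0 ∨
      (p : ℕ) = q + 1 ∨ (q : ℕ) + 1 = l ∧ (p : ℕ) = 0 := by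
  have hmod : ∀ x : Fin l, ((x : ℕ) + 1) % l = if (x : ℕ) + 1 = l then (0 : ℕ) else x + 1 := by
    intro x
    split_ifs with h
    · rw [h, Nat.mod_self]
    · exact Nat.mod_eq_of_lt (by omega)
  rw [HCyc, SimpleGraph.fromRel_adj]
  simp only [hcycRel, hmod, ne_eq, Sum.inl.injEq, Fin.ext_iff]
  split_ifs <;> omega

theorem hCyc_adj_inr_inl {l : ℕ} {v : Bool} {p : Fin l} :
    (HCyc l).Adj (.inr v) (.inl p) ↔ (p : ℕ) = (bif v then 1 else 0 : ℕ) := by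
  rw [HCyc, SimpleGraph.fromRel_adj]
  cases v <;> simp [hcycRel]

theorem hCyc_not_adj_inr_inr {l : ℕ} {v w : Bool} : ¬ (HCyc l).Adj (.inr v) (.inr w) := by
  rw [HCyc, SimpleGraph.fromRel_adj]
  cases v <;> cases w <;> simp [hcycRel]

section HCyc

variable {l A B : ℕ} {W : ℕ → ℕ}

theorem ne_pendant_of_hCyc_adj (hl : 3 ≤ l) (hA1 : A ≠ W 1) (hAl : A ≠ W (l - 1))
    (hB0 : B ≠ W 0) (hB2 : B ≠ W 2) {p q : Fin l} {v : Bool}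
    (hq : (HCyc l).Adj (.inl p) (.inl q)) (hv : (HCyc l).Adj (.inl p) (.inr v)) :
    W q ≠ bif v then B else A := by
  rw [hCyc_adj_inl_inl hl] at hq
  rw [SimpleGraph.adj_comm, hCyc_adj_inr_inl] at hv
  cases v
  · rcases (by simp at hv; omega : (q : ℕ) = 1 ∨ (q : ℕ) = l - 1) with h | h <;>
      simpa [h] using Ne.symm ‹_›
  · rcases (by simp at hv; omega : (q : ℕ) = 0 ∨ (q : ℕ) = 2) with h | h <;>
      simpa [h] using Ne.symm ‹_›

theorem isKL21Labeling_hCyc (hl : 3 ≤ l) (hper : Function.Periodic W l) (hle : ∀ j, W j ≤ 6)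
    (hA : A ≤ 6) (hB : B ≤ 6) (hfar : ∀ j, Far (W j) (W (j + 1))) (hne : ∀ j, W j ≠ W (j + 2))
    (hA0 : Far A (W 0)) (hA1 : A ≠ W 1) (hAl : A ≠ W (l - 1)) (hB1 : Far B (W 1))
    (hB0 : B ≠ W 0) (hB2 : B ≠ W 2) :
    IsKL21Labeling (HCyc l) 6 (Sum.elim (fun j : Fin l => W j) (fun v => bif v then B else A)) := by
  have hmod : ∀ m n : ℕ, m = n ∨ m + l = n → W m = W n := by
    rintro m n (rfl | rfl)
    exacts [rfl, (hper m).symm]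
  refine ⟨.of_far_of_ne ?_ ?_, ?_⟩
  · rintro (p | v) (q | w) h
    · rw [hCyc_adj_inl_inl hl] at h
      rcases (by omega : (q : ℕ) = p + 1 ∨ (q : ℕ) + l = p + 1 ∨
          (p : ℕ) = q + 1 ∨ (p : ℕ) + l = q + 1) with h | h | h | h
      · simpa [hmod _ _ (.inl h)] using hfar p
      · simpa [hmod _ _ (.inr h)] using hfar p
      · simpa [hmod _ _ (.inl h)] using (hfar q).symm
      · simpa [hmod _ _ (.inr h)] using (hfar q).symm
    · rw [SimpleGraph.adj_comm, hCyc_adj_inr_inl] at h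
      cases w <;> simpa [show (p : ℕ) = _ from h] using Far.symm ‹_›
    · rw [hCyc_adj_inr_inl] at h
      cases v <;> simpa [show (q : ℕ) = _ from h] using ‹Far _ _›
    · exact absurd h hCyc_not_adj_inr_inr
  · rintro x y (p | v) hx hy hxy
    · rcases x with q | w <;> rcases y with q' | w'
      · have hqq : (q : ℕ) ≠ q' := fun h => hxy (congrArg _ (Fin.ext h))
        rw [hCyc_adj_inl_inl hl] at hx hy
        rcases (by omega : (q' : ℕ) = q + 2 ∨ (q' : ℕ) + l = q + 2 ∨
            (q : ℕ) = q' + 2 ∨ (q : ℕ) + l = q' + 2) with h | h | h | h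
        · simpa [hmod _ _ (.inl h)] using hne q
        · simpa [hmod _ _ (.inr h)] using hne q
        · simpa [hmod _ _ (.inl h)] using (hne q').symm
        · simpa [hmod _ _ (.inr h)] using (hne q').symm
      · exact ne_pendant_of_hCyc_adj hl hA1 hAl hB0 hB2 hx hy
      · exact (ne_pendant_of_hCyc_adj hl hA1 hAl hB0 hB2 hy hx).symm
      · rw [SimpleGraph.adj_comm, hCyc_adj_inr_inl] at hx hy
        cases w <;> cases w' <;> simp_all
    · rcases x with q | w <;> rcases y with q' | w'
      · rw [hCyc_adj_inr_inl] at hx hy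
        exact absurd (congrArg _ (Fin.ext (hx.trans hy.symm))) hxy
      all_goals first | exact absurd hx hCyc_not_adj_inr_inr | exact absurd hy hCyc_not_adj_inr_inr
  · rintro (p | (_ | _))
    exacts [hle p, hA, hB]

end HCyc

/-- The labels of `u_1, u_2, u_3, …`: `a, b, d`, then the block `p₀ p₁ c` repeated. -/
def cycleSeq (a b d c p₀ p₁ : ℕ) : ℕ → ℕ
  | 0 => a
  | 1 => b
  | 2 => d
  | n + 3 => if n % 3 = 0 then p₀ else if n % 3 = 1 then p₁ else c

def cycleLabel (l a b d c p₀ p₁ : ℕ) (j : ℕ) : ℕ := cycleSeq a b d c p₀ p₁ (j % l)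

/-- The repeated block `p₀ p₁ c` of the cycle labels fits with itself, with the labels
`a` of `u_1` and `b` of `u_2`, and with the label `A` of the pendant vertex at `u_1`. -/
def BlockFits (A a b p₀ p₁ c : ℕ) : Prop :=
  Far p₀ p₁ ∧ Far p₁ c ∧ Far c p₀ ∧ Far c a ∧ p₁ ≠ a ∧ c ≠ b ∧ c ≠ A ∧
  EdgeExtendable p₀ p₁ c p₀ ∧ EdgeExtendable p₁ c p₀ p₁ ∧ EdgeExtendable c p₀ p₁ c ∧
  EdgeExtendable p₀ p₁ c a

/-- The label `d` of `u_3` fits between `b` and the block `p₀ p₁ c`, and with the label `B`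
of the pendant vertex at `u_2`. -/
def HeadFits (a b B p₀ p₁ c d : ℕ) : Prop :=
  Far b d ∧ Far d p₀ ∧ d ≠ a ∧ p₀ ≠ b ∧ d ≠ p₁ ∧ d ≠ B ∧
  EdgeExtendable b d p₀ p₁ ∧ EdgeExtendable d p₀ p₁ c

section Cycle

variable {l A a b B d c p₀ p₁ : ℕ}

local notation "W" => cycleLabel l a b d c p₀ p₁

theorem cycleLabel_mod (j : ℕ) : W (j % l) = W j := by
  simp [cycleLabel]

theorem cycleLabel_mod_add (j k : ℕ) : W (j % l + k) = W (j + k) := by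
  simp [cycleLabel, Nat.mod_add_mod]

theorem cycleLabel_of_lt {n : ℕ} (h : n < l) : W n = cycleSeq a b d c p₀ p₁ n := by
  rw [cycleLabel, Nat.mod_eq_of_lt h]

theorem cycleLabel_periodic : Function.Periodic W l := by
  simp [Function.Periodic, cycleLabel]

/-- Since `3 ∣ l`, every window of four consecutive labels on the cycle is one of nine. -/
theorem cycleLabel_window (hl : 6 ≤ l) (h3 : l % 3 = 0) (P : ℕ → ℕ → ℕ → ℕ → Prop) {r : ℕ}
    (hr : r < l) (h₀ : r = 0 → P a b d p₀) (h₁ : P b d p₀ p₁) (h₂ : P d p₀ p₁ c)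
    (h₃ : P p₀ p₁ c p₀) (h₄ : P p₁ c p₀ p₁) (h₅ : P c p₀ p₁ c) (h₆ : P p₀ p₁ c a)
    (h₇ : r + 2 = l → P p₁ c a b) (h₈ : r + 1 = l → P c a b d) :
    P (W r) (W (r + 1)) (W (r + 2)) (W (r + 3)) := by
  match r with
  | 0 =>
    repeat rw [cycleLabel_of_lt (by omega)]
    exact h₀ rfl
  | 1 | 2 =>
    repeat rw [cycleLabel_of_lt (by omega)]
    simpa [cycleSeq] using ‹_›
  | n + 3 =>
    rcases (by omega : n + 6 < l ∨ n + 6 = l ∨ n + 5 = l ∨ n + 4 = l) with h | h | h | h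
    · repeat rw [cycleLabel_of_lt (by omega)]
      rcases (by omega : n % 3 = 0 ∨ n % 3 = 1 ∨ n % 3 = 2) with hn | hn | hn <;>
        simpa [cycleSeq, hn, Nat.add_mod n] using ‹_›
    · rw [show n + 3 + 3 = 0 + l by omega, cycleLabel_periodic]
      repeat rw [cycleLabel_of_lt (by omega)]
      simpa [cycleSeq, show n % 3 = 0 by omega, Nat.add_mod n] using h₆
    · rw [show n + 3 + 2 = 0 + l by omega, show n + 3 + 3 = 1 + l by omega, cycleLabel_periodic,
        cycleLabel_periodic]
      repeat rw [cycleLabel_of_lt (by omega)]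
      simpa [cycleSeq, show n % 3 = 1 by omega, Nat.add_mod n] using h₇ (by omega)
    · rw [show n + 3 + 1 = 0 + l by omega, show n + 3 + 2 = 1 + l by omega,
        show n + 3 + 3 = 2 + l by omega, cycleLabel_periodic, cycleLabel_periodic,
        cycleLabel_periodic]
      repeat rw [cycleLabel_of_lt (by omega)]
      simpa [cycleSeq, show n % 3 = 2 by omega] using h₈ (by omega)

theorem cycleLabel_le (ha : a ≤ 6) (hb : b ≤ 6) (hd : d ≤ 6) (hc : c ≤ 6) (hp₀ : p₀ ≤ 6)
    (hp₁ : p₁ ≤ 6) (j : ℕ) : W j ≤ 6 := by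
  unfold cycleLabel
  match j % l with
  | 0 | 1 | 2 => assumption
  | n + 3 => simp only [cycleSeq]; split_ifs <;> assumption

theorem cycleLabel_pred (hl : 6 ≤ l) (h3 : l % 3 = 0) : W (l - 1) = c := by
  rw [cycleLabel_of_lt (by omega), show l - 1 = (l - 4) + 3 by omega]
  simp [cycleSeq, show (l - 4) % 3 = 2 by omega]

theorem far_cycleLabel (hl : 6 ≤ l) (h3 : l % 3 = 0) (hab : Far a b)
    (hblock : BlockFits A a b p₀ p₁ c) (hhead : HeadFits a b B p₀ p₁ c d) (j : ℕ) :
    Far (W j) (W (j + 1)) := by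
  obtain ⟨h01, h1c, hc0, hca, -⟩ := hblock
  obtain ⟨hbd, hd0, -⟩ := hhead
  simpa [cycleLabel_mod, cycleLabel_mod_add] using
    cycleLabel_window hl h3 (fun x y _ _ => Far x y) (Nat.mod_lt j (by omega)) (fun _ => hab)
      hbd hd0 h01 h1c hc0 h01 (fun _ => h1c) (fun _ => hca)

theorem cycleLabel_ne_add_two (hl : 6 ≤ l) (h3 : l % 3 = 0)
    (hblock : BlockFits A a b p₀ p₁ c) (hhead : HeadFits a b B p₀ p₁ c d) (j : ℕ) :
    W j ≠ W (j + 2) := by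
  obtain ⟨h01, h1c, hc0, -, h1a, hcb, -⟩ := hblock
  obtain ⟨-, -, hda, h0b, hd1, -⟩ := hhead
  simpa [cycleLabel_mod, cycleLabel_mod_add] using
    cycleLabel_window hl h3 (fun x _ z _ => x ≠ z) (Nat.mod_lt j (by omega)) (fun _ => hda.symm)
      h0b.symm hd1 hc0.ne.symm h01.ne.symm h1c.ne.symm hc0.ne.symm (fun _ => h1a)
      (fun _ => hcb)

theorem edgeExtendable_cycleLabel (hl : 6 ≤ l) (h3 : l % 3 = 0)
    (hblock : BlockFits A a b p₀ p₁ c) (hhead : HeadFits a b B p₀ p₁ c d) {i : ℕ} (hi : 1 ≤ i)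
    (hil : i + 3 ≤ l) : EdgeExtendable (W i) (W (i + 1)) (W (i + 2)) (W (i + 3)) := by
  obtain ⟨-, -, -, -, -, -, -, e₀, e₁, e₂, e₃⟩ := hblock
  obtain ⟨-, -, -, -, -, -, eb, ed⟩ := hhead
  exact cycleLabel_window hl h3 EdgeExtendable (by omega) (fun _ => by omega) eb ed e₀ e₁ e₂ e₃
    (fun _ => by omega) (fun _ => by omega)

theorem pathExtendable_cycleLabel (hl : 6 ≤ l) (h3 : l % 3 = 0) (hab : Far a b)
    (hblock : BlockFits A a b p₀ p₁ c) (hhead : HeadFits a b B p₀ p₁ c d)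
    (hle : ∀ j, W j ≤ 6) :
    PathExtendable (l - 2) (fun m : Fin (l - 2 + 2) => W ((m + 1) % l)) := by
  refine pathExtendable_of_edgeExtendable (s := fun m => W ((m + 1) % l)) (fun j _ => hle _)
    (fun j _ => ?_) (fun j _ => ?_) (fun i hi _ => ?_)
  · simpa [cycleLabel_mod] using far_cycleLabel hl h3 hab hblock hhead (j + 1)
  · simpa [cycleLabel_mod] using cycleLabel_ne_add_two hl h3 hblock hhead (j + 1)
  · simpa [cycleLabel_mod, Nat.sub_add_cancel hi] using
      edgeExtendable_cycleLabel hl h3 hblock hhead hi (by omega)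

theorem isKL21Labeling_cycleLabel (hl : 6 ≤ l) (h3 : l % 3 = 0) (hab : Far a b)
    (hblock : BlockFits A a b p₀ p₁ c) (hhead : HeadFits a b B p₀ p₁ c d)
    (hle : ∀ j, W j ≤ 6) (hA : A ≤ 6) (hB : B ≤ 6) (hAa : Far A a) (hAb : A ≠ b)
    (hBb : Far B b) (hBa : B ≠ a) :
    IsKL21Labeling (HCyc l) 6 (Sum.elim (fun j : Fin l => W j) (fun v => bif v then B else A)) := by
  have h₀ : W 0 = a := by simp [cycleLabel, cycleSeq]
  have h₁ : W 1 = b := by simp [cycleLabel_of_lt (show 1 < l by omega), cycleSeq]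
  have h₂ : W 2 = d := by simp [cycleLabel_of_lt (show 2 < l by omega), cycleSeq]
  obtain ⟨-, -, -, -, -, -, hcA, -⟩ := id hblock
  obtain ⟨-, -, -, -, -, hdB, -⟩ := id hhead
  refine isKL21Labeling_hCyc (by omega) cycleLabel_periodic hle hA hB
    (far_cycleLabel hl h3 hab hblock hhead) (cycleLabel_ne_add_two hl h3 hblock hhead) ?_ ?_ ?_ ?_
    ?_ ?_
  all_goals simp only [h₀, h₁, h₂, cycleLabel_pred hl h3]
  exacts [hAa, hAb, hcA.symm, hBb, hBa, hdB.symm]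

end Cycle

instance (A a b p₀ p₁ c : ℕ) : Decidable (BlockFits A a b p₀ p₁ c) :=
  inferInstanceAs (Decidable (_ ∧ _))

instance (a b B p₀ p₁ c d : ℕ) : Decidable (HeadFits a b B p₀ p₁ c d) :=
  inferInstanceAs (Decidable (_ ∧ _))

set_option synthInstance.maxSize 100000 in
/-- An exhaustive search; the existentials are nested so that it prunes as early as possible. -/
theorem exists_blockFits_headFits : ∀ a ≤ 6, ∀ b ≤ 6, ∀ A ≤ 6, ∀ B ≤ 6,
    Far A a → Far a b → Far b B → A ≠ b → a ≠ B → (∃ t < 7, Length2Fits A a b B t) →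
    ∃ p₀ ≤ 6, ∃ p₁ ≤ 6, ∃ c ≤ 6, BlockFits A a b p₀ p₁ c ∧ ∃ d ≤ 6, HeadFits a b B p₀ p₁ c d := by
  decide +kernel

theorem stmt16 (l : ℕ) (hl : 4 ≤ l) (h3 : l % 3 = 0) (f : Fin 4 → ℕ)
    (hf : PathExtendable 2 f) :
    ∃ f1 : Fin l ⊕ Bool → ℕ,
      IsKL21Labeling (HCyc l) 6 f1 ∧
      f1 (Sum.inr false) = f 0 ∧
      f1 (Sum.inl ⟨0, by omega⟩) = f 1 ∧
      f1 (Sum.inl ⟨1, by omega⟩) = f 2 ∧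
      f1 (Sum.inr true) = f 3 ∧
      PathExtendable (l - 2)
        (fun m : Fin (l - 2 + 2) => f1 (Sum.inl ⟨((m : ℕ) + 1) % l, Nat.mod_lt _ (by omega)⟩)) := by
  have hl6 : 6 ≤ l := by omega
  obtain ⟨hP, hle⟩ := hf.1
  obtain ⟨h01, h12, h23, h02, h13⟩ := hP.pathGraph_four
  obtain ⟨p₀, hp₀, p₁, hp₁, c, hc, hblock, d, hd, hhead⟩ := exists_blockFits_headFits _ (hle 1) _
    (hle 2) _ (hle 0) _ (hle 3) h01 h12 h23 h02 h13 (exists_length2Fits_of_pathExtendable_two hf)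
  have hW := cycleLabel_le (l := l) (hle 1) (hle 2) hd hc hp₀ hp₁
  refine ⟨Sum.elim (fun j : Fin l => cycleLabel l (f 1) (f 2) d c p₀ p₁ j)
      (fun v => bif v then f 3 else f 0),
    isKL21Labeling_cycleLabel hl6 h3 h12 hblock hhead hW (hle 0) (hle 3) h01 h02 h23.symm h13.symm,
    rfl, ?_, ?_, rfl, pathExtendable_cycleLabel hl6 h3 h12 hblock hhead hW⟩
  · simp [cycleLabel, cycleSeq]
  · simp [cycleLabel_of_lt (show 1 < l by omega), cycleSeq]
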